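/- There exists a constant C > 0 such that for all t ≥ T := (2r²/(9μ))^{1/(2α)}, ((r²·t^{−α} − 3rα·t^{−1})/(9·t^{α}))·‖x(t) − x_*‖² ≤ C · exp(−(2/3)·(r/(1−α))·t^{1−α}). -/

import Mathlib

/-!
Write the damping `r / t ^ α` as `3 λ` with `λ t = r / (3 t ^ α)`, let `Λ` be a primitive of `λ`
and `y = x - x_*`. The Lyapunov function
`E = f x - f_* + ‖ẋ + 2 λ y‖² / 2 - (λ² + λ̇) ‖y‖²`
satisfies `Ė + 2 λ E = 2 λ (f x - f_* - ⟪∇f x, y⟫) + (2 λ³ - λ̈) ‖y‖²`; since `λ̈ ≥ 0`,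
strong convexity makes this nonpositive as soon as `2 λ² ≤ μ`, that is for `t ≥ T`. Hence
`E · exp (2 Λ)` decreases on `[T, ∞)`, and `2 Λ t = (2/3) (r / (1 - α)) t ^ (1 - α)`. The
coefficient in the claim is exactly `λ² + λ̇`; it is bounded by `E` once `4 λ² ≤ μ`, and on the
compact interval before that by the decreasing energy `f x - f_* + ‖ẋ‖² / 2`.
-/

open scoped RealInnerProductSpace
open Real Set

section StrongConvexity

variable {E : Type*} [NormedAddCommGroup E] [InnerProductSpace ℝ E]
  {f : E → ℝ} {f' : E → E} {μ : ℝ} {xstar : E}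

theorem HasGradientAt.eq_zero_of_forall_le [CompleteSpace E] {g : E}
    (hf : HasGradientAt f g xstar) (hmin : ∀ p, f xstar ≤ f p) : g = 0 := by
  have hloc : IsLocalMin f xstar := Filter.Eventually.of_forall hmin
  have h := hloc.hasFDerivAt_eq_zero (hasGradientAt_iff_hasFDerivAt.mp hf)
  exact (InnerProductSpace.toDual ℝ E).injective (by simpa using h)

variable (hsc : ∀ p q, f q ≥ f p + ⟪f' p, q - p⟫ + μ / 2 * ‖q - p‖ ^ 2)
include hsc

theorem sq_norm_sub_le_of_strongConvex (h0 : f' xstar = 0) (p : E) :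
    μ / 2 * ‖p - xstar‖ ^ 2 ≤ f p - f xstar := by
  have h := hsc xstar p
  rw [h0, inner_zero_left] at h
  linarith

theorem sub_add_sq_norm_le_inner_of_strongConvex (p : E) :
    f p - f xstar + μ / 2 * ‖p - xstar‖ ^ 2 ≤ ⟪f' p, p - xstar⟫ := by
  have h := hsc p xstar
  rw [← neg_sub p xstar, inner_neg_right, norm_neg] at h
  linarith

theorem lyapunov_dissipation_nonpos {l l'' : ℝ} (hl : 0 ≤ l) (hlμ : 2 * l ^ 2 ≤ μ)
    (hl'' : 0 ≤ l'') (p : E) :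
    2 * l * (f p - f xstar - ⟪f' p, p - xstar⟫) + (2 * l ^ 3 - l'') * ‖p - xstar‖ ^ 2 ≤ 0 := by
  have h := mul_le_mul_of_nonneg_left
    (sub_add_sq_norm_le_inner_of_strongConvex (xstar := xstar) hsc p) hl
  have hq := sq_nonneg ‖p - xstar‖
  nlinarith [mul_nonneg (mul_nonneg hl hq) (sub_nonneg.2 hlμ), mul_nonneg hl'' hq]

end StrongConvexity

section Monotonicity

theorem antitoneOn_Ici_of_hasDerivAt_nonpos {g g' : ℝ → ℝ} {T : ℝ}
    (hg : ∀ s ≥ T, HasDerivAt g (g' s) s) (hg' : ∀ s ≥ T, g' s ≤ 0) : AntitoneOn g (Ici T) := by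
  refine antitoneOn_of_hasDerivWithinAt_nonpos (f' := g') (convex_Ici T)
    (fun s hs ↦ (hg s hs).continuousAt.continuousWithinAt) (fun s hs ↦ ?_) (fun s hs ↦ ?_)
  · rw [interior_Ici] at hs
    exact (hg s (le_of_lt hs)).hasDerivWithinAt
  · rw [interior_Ici] at hs
    exact hg' s (le_of_lt hs)

theorem antitoneOn_mul_exp_of_hasDerivAt {g g' Λ Λ' : ℝ → ℝ} {T : ℝ}
    (hg : ∀ s ≥ T, HasDerivAt g (g' s) s) (hΛ : ∀ s ≥ T, HasDerivAt Λ (Λ' s) s)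
    (h : ∀ s ≥ T, g' s + Λ' s * g s ≤ 0) : AntitoneOn (fun s ↦ g s * exp (Λ s)) (Ici T) := by
  refine antitoneOn_Ici_of_hasDerivAt_nonpos (fun s hs ↦ (hg s hs).mul (hΛ s hs).exp)
    (fun s hs ↦ ?_)
  have := mul_nonpos_of_nonpos_of_nonneg (h s hs) (exp_pos (Λ s)).le
  linarith

theorem le_mul_exp_neg_of_antitoneOn {g Λ : ℝ → ℝ} {T t : ℝ}
    (hg : AntitoneOn (fun s ↦ g s * exp (Λ s)) (Ici T)) (ht : T ≤ t) :
    g t ≤ g T * exp (Λ T) * exp (-Λ t) := by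
  calc g t = g t * exp (Λ t) * exp (-Λ t) := by simp [mul_assoc, ← exp_add]
    _ ≤ g T * exp (Λ T) * exp (-Λ t) :=
      mul_le_mul_of_nonneg_right (hg self_mem_Ici ht ht) (exp_pos _).le

theorem exists_le_mul_exp_neg {u Λ : ℝ → ℝ} {T T₁ A B : ℝ} (hΛ : MonotoneOn Λ (Ici T))
    (hu₁ : ∀ t ≥ T₁, u t ≤ A * exp (-Λ t)) (hu : ∀ t ≥ T, u t ≤ B) (hB : 0 ≤ B) :
    ∃ C > 0, ∀ t ≥ T, u t ≤ C * exp (-Λ t) := by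
  set C := max A (B * exp (Λ T₁)) + 1
  refine ⟨C, by positivity, fun t ht ↦ ?_⟩
  rcases le_total T₁ t with h₁ | h₁
  · calc u t ≤ A * exp (-Λ t) := hu₁ t h₁
      _ ≤ C * exp (-Λ t) := by gcongr; linarith [le_max_left A (B * exp (Λ T₁))]
  · have hΛt : Λ t ≤ Λ T₁ := hΛ ht (ht.trans h₁) h₁
    calc u t ≤ B := hu t ht
      _ = B * exp (Λ T₁) * exp (-Λ T₁) := by simp [mul_assoc, ← exp_add]
      _ ≤ B * exp (Λ T₁) * exp (-Λ t) := by gcongr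
      _ ≤ C * exp (-Λ t) := by gcongr; linarith [le_max_right A (B * exp (Λ T₁))]

end Monotonicity

section DampedFlow

variable {E : Type*} [NormedAddCommGroup E] {f : E → ℝ} {f' : E → E} {μ : ℝ} {xstar : E}
  {x x' x'' : ℝ → E} {s T : ℝ}

noncomputable def energy (f : E → ℝ) (xstar : E) (x x' : ℝ → E) (s : ℝ) : ℝ :=
  f (x s) - f xstar + ‖x' s‖ ^ 2 / 2

theorem energy_nonneg (hmin : ∀ p, f xstar ≤ f p) (s : ℝ) : 0 ≤ energy f xstar x x' s := by
  have := hmin (x s)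
  unfold energy
  positivity

theorem coeff_mul_sq_norm_le_energy {l l' : ℝ}
    (hgrowth : μ / 2 * ‖x s - xstar‖ ^ 2 ≤ f (x s) - f xstar) (hlμ : 2 * l ^ 2 ≤ μ)
    (hl' : l' ≤ 0) : (l ^ 2 + l') * ‖x s - xstar‖ ^ 2 ≤ energy f xstar x x' s := by
  unfold energy
  have := sq_nonneg ‖x s - xstar‖
  have := sq_nonneg ‖x' s‖
  nlinarith

variable [InnerProductSpace ℝ E]

noncomputable def lyapunov (f : E → ℝ) (xstar : E) (x x' : ℝ → E) (l l' : ℝ → ℝ) (s : ℝ) : ℝ :=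
  f (x s) - f xstar + ‖x' s + (2 * l s) • (x s - xstar)‖ ^ 2 / 2
    - (l s ^ 2 + l' s) * ‖x s - xstar‖ ^ 2

theorem coeff_mul_sq_norm_le_lyapunov {l l' : ℝ → ℝ}
    (hgrowth : μ / 2 * ‖x s - xstar‖ ^ 2 ≤ f (x s) - f xstar) (hlμ : 4 * l s ^ 2 ≤ μ)
    (hl' : l' s ≤ 0) :
    (l s ^ 2 + l' s) * ‖x s - xstar‖ ^ 2 ≤ lyapunov f xstar x x' l l' s := by
  unfold lyapunov
  have := sq_nonneg ‖x s - xstar‖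
  have := sq_nonneg ‖x' s + (2 * l s) • (x s - xstar)‖
  nlinarith

theorem HasGradientAt.comp_hasDerivAt [CompleteSpace E] {g : E}
    (hf : HasGradientAt f g (x s)) (hx : HasDerivAt x (x' s) s) :
    HasDerivAt (fun s ↦ f (x s)) ⟪g, x' s⟫ s := by
  have h := (hasGradientAt_iff_hasFDerivAt.mp hf).comp_hasDerivAt s hx
  simp only [InnerProductSpace.toDual_apply_apply] at h
  exact h

theorem hasDerivAt_energy [CompleteSpace E] {γ : ℝ} (hf : HasGradientAt f (f' (x s)) (x s))
    (hx : HasDerivAt x (x' s) s) (hx' : HasDerivAt x' (x'' s) s)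
    (hode : x'' s + γ • x' s + f' (x s) = 0) :
    HasDerivAt (energy f xstar x x') (-γ * ‖x' s‖ ^ 2) s := by
  have hx'' : x'' s = -(γ • x' s) - f' (x s) := by
    rw [← sub_eq_zero, ← hode]; abel
  refine ((hf.comp_hasDerivAt hx).sub_const (f xstar)).add (hx'.norm_sq.div_const 2)
    |>.congr_deriv ?_
  rw [hx'', inner_sub_right, inner_neg_right, real_inner_smul_right, real_inner_self_eq_norm_sq,
    real_inner_comm]
  ring

theorem hasDerivAt_lyapunov [CompleteSpace E] {l l' l'' : ℝ → ℝ}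
    (hf : HasGradientAt f (f' (x s)) (x s)) (hx : HasDerivAt x (x' s) s)
    (hx' : HasDerivAt x' (x'' s) s) (hl : HasDerivAt l (l' s) s) (hl' : HasDerivAt l' (l'' s) s)
    (hode : x'' s + (3 * l s) • x' s + f' (x s) = 0) :
    HasDerivAt (lyapunov f xstar x x' l l')
      (2 * l s * (f (x s) - f xstar - ⟪f' (x s), x s - xstar⟫)
        + (2 * l s ^ 3 - l'' s) * ‖x s - xstar‖ ^ 2
        - 2 * l s * lyapunov f xstar x x' l l' s) s := by
  have hx'' : x'' s = -((3 * l s) • x' s) - f' (x s) := by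
    rw [← sub_eq_zero, ← hode]; abel
  have hy : HasDerivAt (fun s ↦ x s - xstar) (x' s) s := hx.sub_const xstar
  have hv : HasDerivAt (fun s ↦ x' s + (2 * l s) • (x s - xstar))
      (x'' s + ((2 * l s) • x' s + (2 * l' s) • (x s - xstar))) s :=
    hx'.add ((hl.const_mul 2).smul hy)
  have hc : HasDerivAt (fun s ↦ l s ^ 2 + l' s) (2 * l s * l' s + l'' s) s := by
    refine ((hl.pow 2).add hl').congr_deriv ?_
    push_cast
    ring
  refine (((hf.comp_hasDerivAt hx).sub_const (f xstar)).add (hv.norm_sq.div_const 2)).sub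
    (hc.mul hy.norm_sq) |>.congr_deriv ?_
  rw [hx'']
  unfold lyapunov
  generalize x' s = u, f' (x s) = g, x s - xstar = y
  simp only [← real_inner_self_eq_norm_sq, inner_add_left, inner_add_right, inner_sub_right,
    inner_neg_right, real_inner_smul_left, real_inner_smul_right,
    real_inner_comm u g, real_inner_comm y u, real_inner_comm y g]
  ring

theorem antitoneOn_energy [CompleteSpace E] {γ : ℝ → ℝ} (hf : ∀ p, HasGradientAt f (f' p) p)
    (hx : ∀ s ≥ T, HasDerivAt x (x' s) s) (hx' : ∀ s ≥ T, HasDerivAt x' (x'' s) s)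
    (hode : ∀ s ≥ T, x'' s + γ s • x' s + f' (x s) = 0) (hγ : ∀ s ≥ T, 0 ≤ γ s) :
    AntitoneOn (energy f xstar x x') (Ici T) :=
  antitoneOn_Ici_of_hasDerivAt_nonpos
    (fun s hs ↦ hasDerivAt_energy (hf _) (hx s hs) (hx' s hs) (hode s hs))
    (fun s hs ↦ by have := hγ s hs; have := sq_nonneg ‖x' s‖; nlinarith)

theorem antitoneOn_lyapunov_mul_exp [CompleteSpace E] {l l' l'' Λ : ℝ → ℝ}
    (hf : ∀ p, HasGradientAt f (f' p) p)
    (hsc : ∀ p q, f q ≥ f p + ⟪f' p, q - p⟫ + μ / 2 * ‖q - p‖ ^ 2)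
    (hx : ∀ s ≥ T, HasDerivAt x (x' s) s) (hx' : ∀ s ≥ T, HasDerivAt x' (x'' s) s)
    (hl : ∀ s ≥ T, HasDerivAt l (l' s) s) (hl' : ∀ s ≥ T, HasDerivAt l' (l'' s) s)
    (hΛ : ∀ s ≥ T, HasDerivAt Λ (l s) s)
    (hode : ∀ s ≥ T, x'' s + (3 * l s) • x' s + f' (x s) = 0)
    (hl0 : ∀ s ≥ T, 0 ≤ l s) (hlμ : ∀ s ≥ T, 2 * l s ^ 2 ≤ μ) (hl''0 : ∀ s ≥ T, 0 ≤ l'' s) :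
    AntitoneOn (fun s ↦ lyapunov f xstar x x' l l' s * exp (2 * Λ s)) (Ici T) :=
  antitoneOn_mul_exp_of_hasDerivAt
    (fun s hs ↦ hasDerivAt_lyapunov (hf _) (hx s hs) (hx' s hs) (hl s hs) (hl' s hs) (hode s hs))
    (fun s hs ↦ (hΛ s hs).const_mul 2)
    (fun s hs ↦ by
      have := lyapunov_dissipation_nonpos (xstar := xstar) hsc (hl0 s hs) (hlμ s hs) (hl''0 s hs)
        (x s)
      linarith)

end DampedFlow

section PowerRate

variable {r α s : ℝ}

noncomputable def lam (r α s : ℝ) : ℝ := r / 3 * s ^ (-α)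

noncomputable def lamDeriv (r α s : ℝ) : ℝ := -(r * α / 3) * s ^ (-α - 1)

noncomputable def lamDeriv2 (r α s : ℝ) : ℝ := r * α * (α + 1) / 3 * s ^ (-α - 2)

noncomputable def lamPrimitive (r α s : ℝ) : ℝ := r / 3 * (s ^ (1 - α) / (1 - α))

theorem hasDerivAt_lam (hs : 0 < s) : HasDerivAt (lam r α) (lamDeriv r α s) s :=
  ((hasDerivAt_rpow_const (Or.inl hs.ne')).const_mul (r / 3)).congr_deriv
    (by unfold lamDeriv; ring)

theorem hasDerivAt_lamDeriv (hs : 0 < s) : HasDerivAt (lamDeriv r α) (lamDeriv2 r α s) s :=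
  ((hasDerivAt_rpow_const (Or.inl hs.ne')).const_mul (-(r * α / 3))).congr_deriv
    (by unfold lamDeriv2; rw [show -α - 1 - 1 = -α - 2 by ring]; ring)

theorem hasDerivAt_lamPrimitive (hα : α ≠ 1) (hs : 0 < s) :
    HasDerivAt (lamPrimitive r α) (lam r α s) s :=
  (((hasDerivAt_rpow_const (Or.inl hs.ne')).div_const (1 - α)).const_mul (r / 3)).congr_deriv (by
    rw [show 1 - α - 1 = -α by ring, lam]
    field_simp [sub_ne_zero.2 hα.symm])

theorem lam_nonneg (hr : 0 ≤ r) (hs : 0 ≤ s) : 0 ≤ lam r α s := by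
  unfold lam; positivity

theorem lamDeriv_nonpos (hr : 0 ≤ r) (hα : 0 ≤ α) (hs : 0 ≤ s) : lamDeriv r α s ≤ 0 := by
  unfold lamDeriv
  have : 0 ≤ r * α / 3 * s ^ (-α - 1) := by positivity
  linarith

theorem lamDeriv2_nonneg (hr : 0 ≤ r) (hα : 0 ≤ α) (hs : 0 ≤ s) : 0 ≤ lamDeriv2 r α s := by
  unfold lamDeriv2; positivity

theorem monotoneOn_lamPrimitive (hr : 0 ≤ r) (hα : α < 1) :
    MonotoneOn (lamPrimitive r α) (Ici 0) := fun a ha b _ hab ↦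
  mul_le_mul_of_nonneg_left
    (div_le_div_of_nonneg_right (rpow_le_rpow ha hab (by linarith)) (by linarith)) (by positivity)

theorem mul_lam_sq_le {μ c : ℝ} (hμ : 0 < μ) (hc : 0 < c) (hr : r ≠ 0) (hα : 0 < α)
    (hs : (c * r ^ 2 / (9 * μ)) ^ (1 / (2 * α)) ≤ s) : c * lam r α s ^ 2 ≤ μ := by
  have hb : 0 < c * r ^ 2 / (9 * μ) := by positivity
  have hs0 : 0 < s := (rpow_pos_of_pos hb _).trans_le hs
  rw [one_div, rpow_inv_le_iff_of_pos hb.le hs0.le (by positivity), mul_comm 2 α,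
    rpow_mul hs0.le, rpow_two, div_le_iff₀ (by positivity)] at hs
  rw [lam, rpow_neg hs0.le]
  field_simp
  linarith

theorem lam_sq_add_lamDeriv (hs : 0 < s) :
    lam r α s ^ 2 + lamDeriv r α s = (r ^ 2 * s ^ (-α) - 3 * r * α * s⁻¹) / (9 * s ^ α) := by
  rw [lam, lamDeriv, sub_eq_add_neg (-α) 1, rpow_add hs, rpow_neg hs.le, rpow_neg_one]
  field_simp
  ring

theorem div_rpow_eq_three_mul_lam (hs : 0 < s) : r / s ^ α = 3 * lam r α s := by
  rw [lam, rpow_neg hs.le]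
  ring

end PowerRate

theorem antitoneOn_lyapunov_lam_mul_exp {E : Type*} [NormedAddCommGroup E] [InnerProductSpace ℝ E]
    [CompleteSpace E] {f : E → ℝ} {f' : E → E} {μ r α : ℝ} {xstar : E} {x x' x'' : ℝ → E}
    (hf : ∀ p, HasGradientAt f (f' p) p)
    (hsc : ∀ p q, f q ≥ f p + ⟪f' p, q - p⟫ + μ / 2 * ‖q - p‖ ^ 2)
    (hμ : 0 < μ) (hr : 0 < r) (hα0 : 0 < α) (hα1 : α < 1)
    (hx : ∀ t > 0, HasDerivAt x (x' t) t) (hx' : ∀ t > 0, HasDerivAt x' (x'' t) t)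
    (hode : ∀ t > 0, x'' t + (r / t ^ α) • x' t + f' (x t) = 0) :
    AntitoneOn (fun s ↦ lyapunov f xstar x x' (lam r α) (lamDeriv r α) s
      * exp (2 * lamPrimitive r α s)) (Ici ((2 * r ^ 2 / (9 * μ)) ^ (1 / (2 * α)))) := by
  have hpos : ∀ s ≥ (2 * r ^ 2 / (9 * μ)) ^ (1 / (2 * α)), 0 < s :=
    fun s hs ↦ (rpow_pos_of_pos (by positivity) _).trans_le hs
  refine antitoneOn_lyapunov_mul_exp hf hsc (fun s hs ↦ hx s (hpos s hs))
    (fun s hs ↦ hx' s (hpos s hs)) (fun s hs ↦ hasDerivAt_lam (hpos s hs))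
    (fun s hs ↦ hasDerivAt_lamDeriv (hpos s hs))
    (fun s hs ↦ hasDerivAt_lamPrimitive hα1.ne (hpos s hs)) (fun s hs ↦ ?_)
    (fun s hs ↦ lam_nonneg hr.le (hpos s hs).le) (fun s hs ↦ mul_lam_sq_le hμ two_pos hr.ne' hα0 hs)
    (fun s hs ↦ lamDeriv2_nonneg hr.le hα0.le (hpos s hs).le)
  rw [← div_rpow_eq_three_mul_lam (hpos s hs)]
  exact hode s (hpos s hs)

theorem stmt_17_general
{n : ℕ} (μ r α : ℝ) (hμ : 0 < μ) (hr : 0 < r) (hα0 : 0 < α) (hα1 : α < 1)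
    (f : EuclideanSpace ℝ (Fin n) → ℝ)
    (f' : EuclideanSpace ℝ (Fin n) → EuclideanSpace ℝ (Fin n))
    (hf' : ∀ p, HasGradientAt f (f' p) p)
    (hsc : ∀ p q, f q ≥ f p + ⟪f' p, q - p⟫ + μ / 2 * ‖q - p‖ ^ 2)
    (xstar : EuclideanSpace ℝ (Fin n)) (hmin : ∀ p, f xstar ≤ f p)
    (x x' x'' : ℝ → EuclideanSpace ℝ (Fin n))
    (hx : ∀ t > (0:ℝ), HasDerivAt x (x' t) t)
    (hx' : ∀ t > (0:ℝ), HasDerivAt x' (x'' t) t)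
    (hode : ∀ t > (0:ℝ), x'' t + (r / t ^ α) • x' t + f' (x t) = 0) :
    ∃ C > (0:ℝ), ∀ t, (2 * r ^ 2 / (9 * μ)) ^ (1 / (2 * α)) ≤ t →
      (r ^ 2 * t ^ (-α) - 3 * r * α * t⁻¹) / (9 * t ^ α) * ‖x t - xstar‖ ^ 2
        ≤ C * Real.exp (-(2 / 3 * (r / (1 - α)) * t ^ (1 - α))) := by
  set T := (2 * r ^ 2 / (9 * μ)) ^ (1 / (2 * α))
  set T₁ := (4 * r ^ 2 / (9 * μ)) ^ (1 / (2 * α))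
  have hT : 0 < T := by positivity
  have hTT₁ : T ≤ T₁ := rpow_le_rpow (by positivity) (by gcongr; norm_num) (by positivity)
  have hpos : ∀ s ≥ T, 0 < s := fun s hs ↦ hT.trans_le hs
  have hgrowth := sq_norm_sub_le_of_strongConvex hsc ((hf' xstar).eq_zero_of_forall_le hmin)
  have hG := antitoneOn_lyapunov_lam_mul_exp (xstar := xstar) hf' hsc hμ hr hα0 hα1 hx hx' hode
  have hW := antitoneOn_energy (xstar := xstar) hf' (fun s hs ↦ hx s (hpos s hs))
    (fun s hs ↦ hx' s (hpos s hs)) (fun s hs ↦ hode s (hpos s hs))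
    (fun s hs ↦ div_nonneg hr.le (rpow_pos_of_pos (hpos s hs) α).le)
  obtain ⟨C, hC, hu⟩ := exists_le_mul_exp_neg (T₁ := T₁) (Λ := fun s ↦ 2 * lamPrimitive r α s)
    (u := fun s ↦ (lam r α s ^ 2 + lamDeriv r α s) * ‖x s - xstar‖ ^ 2)
    (fun a ha b hb hab ↦ by
      have := monotoneOn_lamPrimitive hr.le hα1 (hpos a ha).le (hpos b hb).le hab
      dsimp only; linarith)
    (fun t ht ↦ (coeff_mul_sq_norm_le_lyapunov (hgrowth _) (mul_lam_sq_le hμ four_pos hr.ne' hα0 ht)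
      (lamDeriv_nonpos hr.le hα0.le (hpos t (hTT₁.trans ht)).le)).trans
      (le_mul_exp_neg_of_antitoneOn hG (hTT₁.trans ht)))
    (fun t ht ↦ (coeff_mul_sq_norm_le_energy (hgrowth _) (mul_lam_sq_le hμ two_pos hr.ne' hα0 ht)
      (lamDeriv_nonpos hr.le hα0.le (hpos t ht).le)).trans (hW self_mem_Ici ht ht))
    (energy_nonneg hmin T)
  refine ⟨C, hC, fun t ht ↦ ?_⟩
  rw [← lam_sq_add_lamDeriv (hpos t ht),
    show 2 / 3 * (r / (1 - α)) * t ^ (1 - α) = 2 * lamPrimitive r α t by rw [lamPrimitive]; ring]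
  exact hu t ht

/-- Lemma 9: for `t ≥ T := (2r²/(9μ))^(1/(2α))`,
`((r² t^(-α) - 3rα t⁻¹)/(9 t^α)) ‖x t - x_*‖² = O(exp(-(2/3)(r/(1-α)) t^(1-α)))`. -/
theorem stmt_17
{n : ℕ} (μ r α : ℝ) (hμ : 0 < μ) (hr : 0 < r) (hα0 : 0 < α) (hα1 : α < 1)
    (f : EuclideanSpace ℝ (Fin n) → ℝ)
    (f' : EuclideanSpace ℝ (Fin n) → EuclideanSpace ℝ (Fin n))
    (hf' : ∀ p, HasGradientAt f (f' p) p)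
    (hsc : ∀ p q, f q ≥ f p + ⟪f' p, q - p⟫ + μ / 2 * ‖q - p‖ ^ 2)
    (xstar : EuclideanSpace ℝ (Fin n)) (hmin : ∀ p, f xstar ≤ f p)
    (x x' x'' : ℝ → EuclideanSpace ℝ (Fin n))
    (hx : ∀ t > (0:ℝ), HasDerivAt x (x' t) t)
    (hx' : ∀ t > (0:ℝ), HasDerivAt x' (x'' t) t)
    (hode : ∀ t > (0:ℝ), x'' t + (r / t ^ α) • x' t + f' (x t) = 0)
    (hx0 : ContinuousWithinAt x (Set.Ici 0) 0) :
    ∃ C > (0:ℝ), ∀ t, (2 * r ^ 2 / (9 * μ)) ^ (1 / (2 * α)) ≤ t →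
      (r ^ 2 * t ^ (-α) - 3 * r * α * t⁻¹) / (9 * t ^ α) * ‖x t - xstar‖ ^ 2
        ≤ C * Real.exp (-(2 / 3 * (r / (1 - α)) * t ^ (1 - α))) :=
  stmt_17_general μ r α hμ hr hα0 hα1 f f' hf' hsc xstar hmin x x' x'' hx hx' hode
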